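/- If t₁ = t₁(n) satisfies t₁/n → c ∈ (0,1) and L = L(n) satisfies L(n) ≤ C·n^β for some constants C > 0 and β < 1/2, then the standardized bias term (Lμ/(n − t₁)) / (σ√(1/t₁ + 1/(n − t₁))) tends to 0 as n → ∞, for any fixed μ ∈ ℝ and σ > 0. -/
import Mathlib


open Filter

theorem standardized_bias_tendsto_zero (t₁ L : ℕ → ℕ)
    (ht : ∀ n, 2 ≤ n → 1 ≤ t₁ n ∧ t₁ n ≤ n - 1)
    (c : ℝ) (hc : c ∈ Set.Ioo (0 : ℝ) 1)
    (htc : Tendsto (fun n => (t₁ n : ℝ) / (n : ℝ)) atTop (nhds c))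
    (C β : ℝ) (hC : 0 < C) (hβ0 : 0 ≤ β) (hβ : β < 1 / 2)
    (hL : ∀ n, (L n : ℝ) ≤ C * (n : ℝ) ^ β)
    (μ σ : ℝ) (hσ : 0 < σ) :
    Tendsto
      (fun n =>
        ((L n : ℝ) * μ / ((n : ℝ) - (t₁ n : ℝ))) /
          (σ * Real.sqrt (1 / (t₁ n : ℝ) + 1 / ((n : ℝ) - (t₁ n : ℝ)))))
      atTop (nhds 0) := by
  obtain ⟨hc0, hc1⟩ := hc
  set k : ℝ := (1 - c) / 2 with hk
  have hk0 : 0 < k := by simp only [hk]; linarith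
  set g : ℕ → ℝ := fun n => C * (n : ℝ) ^ β * |μ| / (σ * Real.sqrt (k * n)) with hg
  -- g tends to 0
  have hgto : Tendsto g atTop (nhds 0) := by
    have h1 : Tendsto (fun x : ℝ => x ^ (β - 1 / 2)) atTop (nhds 0) := by
      have := tendsto_rpow_neg_atTop (y := 1 / 2 - β) (by linarith)
      simpa [neg_sub] using this
    have h2 : Tendsto (fun n : ℕ => (C * |μ| / (σ * Real.sqrt k)) * (n : ℝ) ^ (β - 1 / 2))
        atTop (nhds 0) := by
      have := (h1.comp tendsto_natCast_atTop_atTop).const_mul (C * |μ| / (σ * Real.sqrt k))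
      simpa using this
    refine h2.congr' ?_
    filter_upwards [eventually_ge_atTop 1] with n hn
    have hn0 : (0 : ℝ) < (n : ℝ) := by exact_mod_cast hn
    have hsq : Real.sqrt (k * n) = Real.sqrt k * Real.sqrt n := Real.sqrt_mul hk0.le _
    have hsn : Real.sqrt (n : ℝ) = (n : ℝ) ^ (1 / 2 : ℝ) := Real.sqrt_eq_rpow _
    have hrp : (n : ℝ) ^ (β - 1 / 2) = (n : ℝ) ^ β / (n : ℝ) ^ (1 / 2 : ℝ) :=
      Real.rpow_sub hn0 _ _
    rw [hg]
    simp only [hsq, hsn, hrp]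
    field_simp
  -- squeeze
  rw [tendsto_zero_iff_abs_tendsto_zero]
  refine squeeze_zero' (Eventually.of_forall fun n => abs_nonneg _) ?_ hgto
  have hev : ∀ᶠ n in atTop, (t₁ n : ℝ) / (n : ℝ) < (1 + c) / 2 :=
    htc.eventually_lt_const (by linarith)
  filter_upwards [hev, eventually_ge_atTop 2] with n hn hn2
  have hT1 : (1 : ℝ) ≤ (t₁ n : ℝ) := by exact_mod_cast (ht n hn2).1
  have hn0 : (0 : ℝ) < (n : ℝ) := by positivity
  have hD : k * n ≤ (n : ℝ) - (t₁ n : ℝ) := by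
    have := (div_lt_iff₀ hn0).mp hn
    simp only [hk]; nlinarith
  have hDpos : (0 : ℝ) < (n : ℝ) - (t₁ n : ℝ) := lt_of_lt_of_le (by positivity) hD
  set D : ℝ := (n : ℝ) - (t₁ n : ℝ)
  set s : ℝ := Real.sqrt (1 / (t₁ n : ℝ) + 1 / D) with hs
  have hspos : 0 < s := Real.sqrt_pos.mpr (by positivity)
  have hsD : Real.sqrt D ≤ D * s := by
    have h1 : Real.sqrt (1 / D) ≤ s := Real.sqrt_le_sqrt (by
      have : (0:ℝ) ≤ 1 / (t₁ n : ℝ) := by positivity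
      linarith)
    have h2 : Real.sqrt (1 / D) = 1 / Real.sqrt D := by
      rw [one_div, one_div, Real.sqrt_inv]
    have hDs : 0 < Real.sqrt D := Real.sqrt_pos.mpr hDpos
    calc Real.sqrt D = D * (1 / Real.sqrt D) := by
          rw [mul_one_div, Real.div_sqrt]
      _ ≤ D * s := by
          apply mul_le_mul_of_nonneg_left _ hDpos.le
          rw [← h2]; exact h1
  have hdenom : σ * Real.sqrt (k * n) ≤ D * (σ * s) := by
    have : Real.sqrt (k * n) ≤ Real.sqrt D := Real.sqrt_le_sqrt hD
    calc σ * Real.sqrt (k * n) ≤ σ * Real.sqrt D := by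
          exact mul_le_mul_of_nonneg_left this hσ.le
      _ ≤ σ * (D * s) := mul_le_mul_of_nonneg_left hsD hσ.le
      _ = D * (σ * s) := by ring
  have habs : |(L n : ℝ) * μ / D / (σ * s)| = (L n : ℝ) * |μ| / (D * (σ * s)) := by
    rw [div_div, abs_div, abs_mul, abs_mul, abs_mul,
      abs_of_pos hDpos, abs_of_pos hσ, abs_of_pos hspos,
      abs_of_nonneg (Nat.cast_nonneg _)]
  show |(L n : ℝ) * μ / D / (σ * s)| ≤ g n
  rw [habs, hg]
  have hnum : (L n : ℝ) * |μ| ≤ C * (n : ℝ) ^ β * |μ| :=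
    mul_le_mul_of_nonneg_right (hL n) (abs_nonneg _)
  exact div_le_div₀ (by positivity) hnum (by positivity) hdenom
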